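/- Tangential cone estimate from a uniform operator bound: in the setting of the previous identity, if ‖B(p)⁻¹ B'(h)‖_{X→X} ≤ C‖h‖_P, then ‖S(p+h) − S(p) − S'(p)h‖_X ≤ C ‖h‖_P ‖S(p+h) − S(p)‖_X. -/

import Mathlib

/-- With `E = B(p)`, `A = B(p+h)` and `u = S(p+h)` this is the second-order remainder identity
`S(p+h) - S(p) - S'(p)h = -B(p)⁻¹ B'(h) (S(p+h) - S(p))`. -/
theorem LinearEquiv.sub_symm_sub_neg_symm_eq_neg_symm {R M N : Type*} [Ring R]
    [AddCommGroup M] [Module R M] [AddCommGroup N] [Module R N]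
    (E : M ≃ₗ[R] N) (A : M →ₗ[R] N) {u : M} {f : N} (hu : A u = f) :
    u - E.symm f - -E.symm ((A - E) (E.symm f)) = -E.symm ((A - E) (u - E.symm f)) := by
  apply E.injective
  simp only [map_sub, map_neg, LinearMap.sub_apply, LinearEquiv.coe_coe,
    LinearEquiv.apply_symm_apply, hu]
  abel

theorem stmt_6_general
    {P X Xd : Type*} [NormedAddCommGroup P]
    [NormedAddCommGroup X] [NormedSpace ℝ X]
    [NormedAddCommGroup Xd] [NormedSpace ℝ Xd]
    (B : P → (X →L[ℝ] Xd))
    (p h : P) (f : Xd) (C : ℝ)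
    (Ep Eph : X ≃L[ℝ] Xd)
    (hEp : (Ep : X →L[ℝ] Xd) = B p)
    (hEph : (Eph : X →L[ℝ] Xd) = B (p + h))
    (hbound : ∀ x : X, ‖Ep.symm ((B (p + h) - B p) x)‖ ≤ C * ‖h‖ * ‖x‖) :
    ‖Eph.symm f - Ep.symm f - (-(Ep.symm ((B (p + h) - B p) (Ep.symm f))))‖ ≤
      C * ‖h‖ * ‖Eph.symm f - Ep.symm f‖ := by
  rw [← hEp, ← hEph] at hbound ⊢
  have hremainder := Ep.toLinearEquiv.sub_symm_sub_neg_symm_eq_neg_symm Eph.toLinearMap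
    (Eph.apply_symm_apply f)
  calc _ = ‖-Ep.symm ((Eph - Ep : X →L[ℝ] Xd) (Eph.symm f - Ep.symm f))‖ :=
        congrArg norm hremainder
    _ ≤ _ := (norm_neg _).trans_le (hbound _)

/-- Tangential cone estimate from a uniform operator bound.  In the setting of
the second-order remainder identity (affine family `p ↦ B(p) ∈ L(X, X*)`, invertible at `p`
and `p+h`, `S(p) = B(p)⁻¹f`, `B'(h) = B(p+h) − B(p)`, `S'(p)h = −B(p)⁻¹ B'(h) S(p)`), if
`‖B(p)⁻¹ B'(h)‖_{X→X} ≤ C‖h‖_P`, then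
`‖S(p+h) − S(p) − S'(p)h‖_X ≤ C ‖h‖_P ‖S(p+h) − S(p)‖_X`. -/
theorem stmt_6
    {P X Xd : Type*} [NormedAddCommGroup P] [NormedSpace ℝ P]
    [NormedAddCommGroup X] [NormedSpace ℝ X] [CompleteSpace X]
    [NormedAddCommGroup Xd] [NormedSpace ℝ Xd] [CompleteSpace Xd]
    (B : P → (X →L[ℝ] Xd))
    (hAffine : ∀ p q h : P, B (p + h) - B p = B (q + h) - B q)
    (p h : P) (f : Xd) (C : ℝ) (hC : 0 < C)
    (Ep Eph : X ≃L[ℝ] Xd)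
    (hEp : (Ep : X →L[ℝ] Xd) = B p)
    (hEph : (Eph : X →L[ℝ] Xd) = B (p + h))
    (hbound : ∀ x : X, ‖Ep.symm ((B (p + h) - B p) x)‖ ≤ C * ‖h‖ * ‖x‖) :
    ‖Eph.symm f - Ep.symm f - (-(Ep.symm ((B (p + h) - B p) (Ep.symm f))))‖ ≤
      C * ‖h‖ * ‖Eph.symm f - Ep.symm f‖ :=
  stmt_6_general B p h f C Ep Eph hEp hEph hbound
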